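/- arXiv:0709.1539 — 5 statements merged into one kernel-verified Lean document; each statement's English description precedes it below -/
import Mathlib

section
/- A number of the form 6k - 1 (with k a positive integer) is composite if and only if there exist positive integers i, j with k = 6ij - i + j or k = 6ij + i - j. -/
/-! The residues modulo 6 that can occur in a factorisation of a number `≡ 5 (mod 6)` are
`1 · 5` and `5 · 1`, so every nontrivial factorisation of `6k - 1` has the shape
`(6i + 1)(6j - 1)` or `(6i - 1)(6j + 1)` with `i, j ≥ 1`; expanding these products gives the
two formulas for `k`. -/

namespace Nat

theorem mod_six_eq_of_mul_mod_six_eq_five {a b : ℕ} (h : a * b % 6 = 5) :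
    a % 6 = 1 ∧ b % 6 = 5 ∨ a % 6 = 5 ∧ b % 6 = 1 := by
  rw [Nat.mul_mod] at h
  have ha := Nat.mod_lt a (show 6 > 0 by norm_num)
  have hb := Nat.mod_lt b (show 6 > 0 by norm_num)
  interval_cases a % 6 <;> interval_cases b % 6 <;> simp_all

theorem six_mul_sub_one_eq_mul_iff {k i j : ℕ} (hj : 1 ≤ j) :
    6 * k - 1 = (6 * i + 1) * (6 * j - 1) ↔ k = 6 * i * j - i + j := by
  obtain ⟨t, rfl⟩ : ∃ t, j = t + 1 := ⟨j - 1, by omega⟩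
  have hlhs : (6 * i + 1) * (6 * (t + 1) - 1) = 36 * (i * t) + 30 * i + 6 * t + 5 := by
    rw [show 6 * (t + 1) - 1 = 6 * t + 5 by omega]; ring
  have hrhs : 6 * i * (t + 1) = 6 * (i * t) + 6 * i := by ring
  rw [hlhs, hrhs]
  omega

theorem six_mul_sub_one_eq_mul_iff' {k i j : ℕ} (hi : 1 ≤ i) :
    6 * k - 1 = (6 * i - 1) * (6 * j + 1) ↔ k = 6 * i * j + i - j := by
  have hj : j ≤ 6 * i * j := Nat.le_mul_of_pos_left j (by omega)
  rw [mul_comm (6 * i - 1), six_mul_sub_one_eq_mul_iff hi, mul_right_comm 6 j i]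
  omega

theorem exists_of_mul_eq_six_mul_sub_one {k a b : ℕ} (hk : 1 ≤ k) (ha : a ≠ 1) (hb : b ≠ 1)
    (hab : a * b = 6 * k - 1) :
    ∃ i j : ℕ, 1 ≤ i ∧ 1 ≤ j ∧ (k = 6 * i * j - i + j ∨ k = 6 * i * j + i - j) := by
  rcases mod_six_eq_of_mul_mod_six_eq_five (by omega : a * b % 6 = 5) with ⟨ha6, hb6⟩ | ⟨ha6, hb6⟩
  · refine ⟨a / 6, b / 6 + 1, by omega, by omega, Or.inl ?_⟩
    rw [← six_mul_sub_one_eq_mul_iff (by omega), ← hab]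
    congr 1 <;> omega
  · refine ⟨a / 6 + 1, b / 6, by omega, by omega, Or.inr ?_⟩
    rw [← six_mul_sub_one_eq_mul_iff' (by omega), ← hab]
    congr 1 <;> omega

end Nat

theorem stmt_7 : ∀ k : ℕ, 1 ≤ k →
    ((1 < 6 * k - 1 ∧ ¬ Nat.Prime (6 * k - 1)) ↔
      ∃ i j : ℕ, 1 ≤ i ∧ 1 ≤ j ∧
        (k = 6 * i * j - i + j ∨ k = 6 * i * j + i - j)) := by
  intro k hk
  constructor
  · rintro ⟨-, hnp⟩
    obtain ⟨a, b, ha, hb, hab⟩ := (Nat.not_prime_iff_exists_mul_eq (by omega)).1 hnp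
    have ha1 : a ≠ 1 := by rintro rfl; omega
    have hb1 : b ≠ 1 := by rintro rfl; omega
    exact Nat.exists_of_mul_eq_six_mul_sub_one hk ha1 hb1 hab
  · rintro ⟨i, j, hi, hj, h | h⟩
    · rw [← Nat.six_mul_sub_one_eq_mul_iff hj] at h
      exact ⟨by omega, h ▸ Nat.not_prime_mul (by omega) (by omega)⟩
    · rw [← Nat.six_mul_sub_one_eq_mul_iff' hi] at h
      exact ⟨by omega, h ▸ Nat.not_prime_mul (by omega) (by omega)⟩
end

section
/- A number of the form 6k + 1 (with k a positive integer) is composite if and only if there exist positive integers i, j with k = 6ij + i + j or k = 6ij - i - j. -/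
/-!
In a nontrivial factorization of a number `≡ 1 (mod 6)` the residues of the two factors multiply
to 1 mod 6, so both are 1 or both are 5: the factors are `6i + 1, 6j + 1` or `6i - 1, 6j - 1` with `i, j ≥ 1`.
Expanding the product, `6k + 1` equals `6(6ij + i + j) + 1` or `6(6ij - i - j) + 1`.
-/

namespace Nat

theorem one_lt_and_not_prime_iff {n : ℕ} :
    (1 < n ∧ ¬ n.Prime) ↔ ∃ a b, 2 ≤ a ∧ 2 ≤ b ∧ n = a * b := by
  constructor
  · rintro ⟨hn, hnp⟩
    obtain ⟨a, b, ha, hb, rfl⟩ := (not_prime_iff_exists_mul_eq hn).mp hnp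
    refine ⟨a, b, ?_, ?_, rfl⟩
    · by_contra!
      interval_cases a <;> omega
    · by_contra!
      interval_cases b <;> omega
  · rintro ⟨a, b, ha, hb, rfl⟩
    exact ⟨by nlinarith, not_prime_mul (by omega) (by omega)⟩

theorem mod_six_eq_of_mul_mod_six_eq_one {a b : ℕ} (h : a * b % 6 = 1) :
    a % 6 = 1 ∧ b % 6 = 1 ∨ a % 6 = 5 ∧ b % 6 = 5 := by
  rw [mul_mod] at h
  have ha := a.mod_lt (show 6 > 0 by norm_num)
  have hb := b.mod_lt (show 6 > 0 by norm_num)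
  interval_cases a % 6 <;> interval_cases b % 6 <;> simp_all

theorem six_mul_add_one_mul_six_mul_add_one (i j : ℕ) :
    (6 * i + 1) * (6 * j + 1) = 6 * (6 * i * j + i + j) + 1 := by
  ring

theorem six_mul_sub_one_mul_six_mul_sub_one {i j : ℕ} (hi : 1 ≤ i) (hj : 1 ≤ j) :
    (6 * i - 1) * (6 * j - 1) = 6 * (6 * i * j - i - j) + 1 := by
  obtain ⟨a, rfl⟩ := exists_add_of_le hi
  obtain ⟨b, rfl⟩ := exists_add_of_le hj
  have h1 : 6 * (1 + a) - 1 = 6 * a + 5 := by omega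
  have h2 : 6 * (1 + b) - 1 = 6 * b + 5 := by omega
  rw [h1, h2]
  ring_nf
  omega

theorem one_lt_and_not_prime_iff_of_mod_six_eq_one {n : ℕ} (hn : n % 6 = 1) :
    (1 < n ∧ ¬ n.Prime) ↔ ∃ i j, 1 ≤ i ∧ 1 ≤ j ∧
      (n = (6 * i + 1) * (6 * j + 1) ∨ n = (6 * i - 1) * (6 * j - 1)) := by
  rw [one_lt_and_not_prime_iff]
  constructor
  · rintro ⟨a, b, ha, hb, rfl⟩
    rcases mod_six_eq_of_mul_mod_six_eq_one hn with ⟨ha1, hb1⟩ | ⟨ha5, hb5⟩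
    · exact ⟨a / 6, b / 6, by omega, by omega, .inl (by congr 1 <;> omega)⟩
    · exact ⟨a / 6 + 1, b / 6 + 1, by omega, by omega, .inr (by congr 1 <;> omega)⟩
  · rintro ⟨i, j, hi, hj, rfl | rfl⟩
    · exact ⟨_, _, by omega, by omega, rfl⟩
    · exact ⟨_, _, by omega, by omega, rfl⟩

end Nat

theorem stmt_8 : ∀ k : ℕ, 1 ≤ k →
    ((1 < 6 * k + 1 ∧ ¬ Nat.Prime (6 * k + 1)) ↔
      ∃ i j : ℕ, 1 ≤ i ∧ 1 ≤ j ∧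
        (k = 6 * i * j + i + j ∨ k = 6 * i * j - i - j)) := by
  intro k _
  rw [Nat.one_lt_and_not_prime_iff_of_mod_six_eq_one (by omega)]
  refine exists₂_congr fun i j => and_congr_right fun hi => and_congr_right fun hj => ?_
  rw [Nat.six_mul_add_one_mul_six_mul_add_one, Nat.six_mul_sub_one_mul_six_mul_sub_one hi hj]
  omega
end

section
/- A number of the form 6k - 1 with k a positive integer is prime if and only if for all positive integers i, j, k ≠ 6ij - i + j and k ≠ 6ij + i - j. -/
/-!
In any factorization `n = m d` of a number `n ≡ 5 (mod 6)` one factor is `≡ 1` and the other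
`≡ 5 (mod 6)`, so `n` is composite exactly when it factors as `(6i + 1)(6j - 1)` with `i, j ≥ 1`. Since
`(6i + 1)(6j - 1) = 6(6ij - i + j) - 1`, this happens for `n = 6k - 1` exactly when
`k = 6ij - i + j`; the second family `6ij + i - j` is the first one with `i` and `j` swapped.
-/

namespace Nat

theorem six_mul_sub_one_eq_mul (i j : ℕ) :
    6 * (6 * i * j - i + j) - 1 = (6 * i + 1) * (6 * j - 1) := by
  rcases Nat.eq_zero_or_pos j with rfl | hj
  · simp
  have hi : i ≤ 6 * i * j := Nat.le_mul_of_pos_right _ hj |>.trans' (by omega)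
  zify [hi, show 1 ≤ 6 * j by omega, show 1 ≤ 6 * (6 * i * j - i + j) by omega]
  ring

theorem six_mul_mul_add_sub_eq_swap (i j : ℕ) : 6 * i * j + i - j = 6 * j * i - j + i := by
  rcases Nat.eq_zero_or_pos i with rfl | hi
  · simp
  have hj : j ≤ 6 * j * i := Nat.le_mul_of_pos_right _ hi |>.trans' (by omega)
  rw [show 6 * j * i = 6 * i * j by ring] at hj ⊢
  omega

theorem mod_six_of_mul_mod_six_eq_five {m d : ℕ} (h : m * d % 6 = 5) :
    (m % 6 = 1 ∧ d % 6 = 5) ∨ (m % 6 = 5 ∧ d % 6 = 1) := by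
  rw [Nat.mul_mod] at h
  have hm := Nat.mod_lt m (show 6 > 0 by norm_num)
  have hd := Nat.mod_lt d (show 6 > 0 by norm_num)
  interval_cases m % 6 <;> interval_cases d % 6 <;> omega

theorem not_prime_iff_exists_mul_of_mod_six_eq_five {n : ℕ} (hn : n % 6 = 5) :
    ¬ n.Prime ↔ ∃ i j, 1 ≤ i ∧ 1 ≤ j ∧ n = (6 * i + 1) * (6 * j - 1) := by
  constructor
  · intro hnp
    obtain ⟨m, ⟨d, rfl⟩, hm, hmn⟩ := Nat.exists_dvd_of_not_prime2 (by omega) hnp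
    have hd : 2 ≤ d := by nlinarith
    rcases mod_six_of_mul_mod_six_eq_five hn with ⟨hm6, hd6⟩ | ⟨hm6, hd6⟩
    · exact ⟨m / 6, d / 6 + 1, by omega, by omega, by congr 1 <;> omega⟩
    · exact ⟨d / 6, m / 6 + 1, by omega, by omega, by rw [mul_comm]; congr 1 <;> omega⟩
  · rintro ⟨i, j, hi, hj, rfl⟩
    exact Nat.not_prime_mul (by omega) (by omega)

end Nat

theorem stmt_9 : ∀ k : ℕ, 1 ≤ k →
    (Nat.Prime (6 * k - 1) ↔
      ∀ i j : ℕ, 1 ≤ i → 1 ≤ j →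
        k ≠ 6 * i * j - i + j ∧ k ≠ 6 * i * j + i - j) := by
  intro k hk
  have hfactor (i j : ℕ) : k = 6 * i * j - i + j ↔ 6 * k - 1 = (6 * i + 1) * (6 * j - 1) := by
    rw [← Nat.six_mul_sub_one_eq_mul]
    omega
  have hswap : (∀ i j : ℕ, 1 ≤ i → 1 ≤ j → k ≠ 6 * i * j - i + j ∧ k ≠ 6 * i * j + i - j) ↔
      ∀ i j : ℕ, 1 ≤ i → 1 ≤ j → k ≠ 6 * i * j - i + j :=
    ⟨fun h i j hi hj => (h i j hi hj).1, fun h i j hi hj =>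
      ⟨h i j hi hj, Nat.six_mul_mul_add_sub_eq_swap i j ▸ h j i hj hi⟩⟩
  rw [hswap, ← not_iff_not, Nat.not_prime_iff_exists_mul_of_mod_six_eq_five (by omega)]
  push Not
  simp only [hfactor]
end

section
/- A number of the form 6k + 1 with k a positive integer is prime if and only if for all positive integers i, j, k ≠ 6ij + i + j and k ≠ 6ij - i - j. -/
/-!
Since `(6i + 1)(6j + 1) = 6(6ij + i + j) + 1` and `(6i - 1)(6j - 1) = 6(6ij - i - j) + 1`, the two
forms of `k` are exactly the nontrivial factorisations of `6k + 1` with both factors `≡ 1` or both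
`≡ -1 (mod 6)`; and any factorisation of a number `≡ 1 (mod 6)` is of one of these two kinds.
-/

namespace Nat

theorem mod_six_of_mul_mod_six_eq_one {a b : ℕ} (h : a * b % 6 = 1) :
    (a % 6 = 1 ∧ b % 6 = 1) ∨ (a % 6 = 5 ∧ b % 6 = 5) := by
  rw [Nat.mul_mod] at h
  have ha : a % 6 < 6 := Nat.mod_lt _ (by norm_num)
  have hb : b % 6 < 6 := Nat.mod_lt _ (by norm_num)
  interval_cases a % 6 <;> interval_cases b % 6 <;> omega

theorem exists_of_mul_eq_six_mul_add_one {a b k : ℕ} (hab : a * b = 6 * k + 1)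
    (ha : 2 ≤ a) (hb : 2 ≤ b) :
    ∃ i j, 1 ≤ i ∧ 1 ≤ j ∧ (k = 6 * i * j + i + j ∨ k = 6 * i * j - i - j) := by
  rcases mod_six_of_mul_mod_six_eq_one (a := a) (b := b) (by omega) with ⟨ha1, hb1⟩ | ⟨ha5, hb5⟩
  · refine ⟨a / 6, b / 6, by omega, by omega, Or.inl ?_⟩
    have := six_mul_add_one_mul_six_mul_add_one (a / 6) (b / 6)
    rw [show 6 * (a / 6) + 1 = a by omega, show 6 * (b / 6) + 1 = b by omega] at this
    omega
  · refine ⟨a / 6 + 1, b / 6 + 1, by omega, by omega, Or.inr ?_⟩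
    have := six_mul_sub_one_mul_six_mul_sub_one (i := a / 6 + 1) (j := b / 6 + 1) (by omega) (by omega)
    rw [show 6 * (a / 6 + 1) - 1 = a by omega, show 6 * (b / 6 + 1) - 1 = b by omega] at this
    omega

end Nat

theorem stmt_10 : ∀ k : ℕ, 1 ≤ k →
    (Nat.Prime (6 * k + 1) ↔
      ∀ i j : ℕ, 1 ≤ i → 1 ≤ j →
        k ≠ 6 * i * j + i + j ∧ k ≠ 6 * i * j - i - j) := by
  intro k hk
  constructor
  · intro hp i j hi hj
    constructor
    · rintro rfl
      rw [← Nat.six_mul_add_one_mul_six_mul_add_one] at hp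
      exact Nat.not_prime_mul (by omega) (by omega) hp
    · rintro rfl
      rw [← Nat.six_mul_sub_one_mul_six_mul_sub_one hi hj] at hp
      exact Nat.not_prime_mul (by omega) (by omega) hp
  · intro h
    by_contra hnp
    obtain ⟨a, ⟨b, hab⟩, ha, hlt⟩ := Nat.exists_dvd_of_not_prime2 (by omega) hnp
    have hb : 2 ≤ b := by
      by_contra! hb
      interval_cases b <;> omega
    obtain ⟨i, j, hi, hj, hk' | hk'⟩ := Nat.exists_of_mul_eq_six_mul_add_one hab.symm ha hb
    · exact (h i j hi hj).1 hk'
    · exact (h i j hi hj).2 hk'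
end

section
/- The set of prime numbers equals {2} ∪ {3} ∪ A' ∪ B', where A' = {6k-1 : k ≥ 1, ∀ i j ≥ 1, k ≠ 6ij - i + j and k ≠ 6ij + i - j} and B' = {6k+1 : k ≥ 1, ∀ i j ≥ 1, k ≠ 6ij + i + j and k ≠ 6ij - i - j}. -/
/-!
Every prime other than 2 and 3 is `6k ± 1`, and a composite number prime to 6 factors as
`(6i ± 1)(6j ± 1)` with `i, j ≥ 1`. Expanding the four products, `6k + 1` arises exactly from
`k = 6ij + i + j` or `k = 6ij - i - j`, and `6k - 1` exactly from `k = 6ij - i + j` or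
`k = 6ij + i - j`.
-/

namespace Nat

theorem six_mul_add_one_mul_six_mul_sub_one (i j : ℕ) :
    (6 * i + 1) * (6 * j - 1) = 6 * (6 * i * j - i + j) - 1 := by
  rcases Nat.eq_zero_or_pos j with rfl | hj
  · simp
  have hij : i ≤ 6 * i * j := by nlinarith
  have hpos : 1 ≤ 6 * (6 * i * j - i + j) := by omega
  zify [hij, hpos, show 1 ≤ 6 * j by omega]
  ring

theorem six_mul_sub_one_mul_six_mul_add_one (i j : ℕ) :
    (6 * i - 1) * (6 * j + 1) = 6 * (6 * i * j + i - j) - 1 := by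
  rcases Nat.eq_zero_or_pos i with rfl | hi
  · simp
  have hij : j < 6 * i * j + i := by nlinarith
  have hpos : 1 ≤ 6 * (6 * i * j + i - j) := by omega
  zify [hij, hpos, show 1 ≤ 6 * i by omega]
  ring

theorem exists_eq_six_mul_add_one_or_sub_one {a : ℕ} (ha : 2 ≤ a) (h2 : ¬ 2 ∣ a)
    (h3 : ¬ 3 ∣ a) : ∃ i, 1 ≤ i ∧ (a = 6 * i + 1 ∨ a = 6 * i - 1) := by
  have : a % 6 = 1 ∨ a % 6 = 5 := by omega
  exact ⟨(a + 1) / 6, by omega, by omega⟩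

theorem exists_mul_eq_of_not_prime {n : ℕ} (hn : 2 ≤ n) (hnp : ¬ n.Prime) :
    ∃ a b, 2 ≤ a ∧ 2 ≤ b ∧ n = a * b := by
  obtain ⟨a, ⟨b, rfl⟩, ha, hab⟩ := exists_dvd_of_not_prime2 hn hnp
  exact ⟨a, b, ha, Nat.lt_of_mul_lt_mul_left (a := a) (by simpa using hab), rfl⟩

theorem not_prime_iff_of_not_two_dvd_of_not_three_dvd {n : ℕ} (hn : 2 ≤ n) (h2 : ¬ 2 ∣ n)
    (h3 : ¬ 3 ∣ n) :
    ¬ n.Prime ↔ ∃ i j, 1 ≤ i ∧ 1 ≤ j ∧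
      (n = 6 * (6 * i * j + i + j) + 1 ∨ n = 6 * (6 * i * j - i - j) + 1 ∨
        n = 6 * (6 * i * j - i + j) - 1 ∨ n = 6 * (6 * i * j + i - j) - 1) := by
  constructor
  · intro hnp
    obtain ⟨a, b, ha, hb, rfl⟩ := exists_mul_eq_of_not_prime hn hnp
    obtain ⟨i, hi, rfl | rfl⟩ := exists_eq_six_mul_add_one_or_sub_one ha
      (fun h => h2 (h.mul_right b)) (fun h => h3 (h.mul_right b)) <;>
    obtain ⟨j, hj, rfl | rfl⟩ := exists_eq_six_mul_add_one_or_sub_one hb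
      (fun h => h2 (h.mul_left _)) (fun h => h3 (h.mul_left _))
    · exact ⟨i, j, hi, hj, .inl (six_mul_add_one_mul_six_mul_add_one i j)⟩
    · exact ⟨i, j, hi, hj, .inr <| .inr <| .inl (six_mul_add_one_mul_six_mul_sub_one i j)⟩
    · exact ⟨i, j, hi, hj, .inr <| .inr <| .inr (six_mul_sub_one_mul_six_mul_add_one i j)⟩
    · exact ⟨i, j, hi, hj, .inr <| .inl (six_mul_sub_one_mul_six_mul_sub_one hi hj)⟩
  · rintro ⟨i, j, hi, hj, rfl | rfl | rfl | rfl⟩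
    · rw [← six_mul_add_one_mul_six_mul_add_one]
      exact not_prime_mul (by omega) (by omega)
    · rw [← six_mul_sub_one_mul_six_mul_sub_one hi hj]
      exact not_prime_mul (by omega) (by omega)
    · rw [← six_mul_add_one_mul_six_mul_sub_one]
      exact not_prime_mul (by omega) (by omega)
    · rw [← six_mul_sub_one_mul_six_mul_add_one]
      exact not_prime_mul (by omega) (by omega)

theorem prime_six_mul_add_one_iff {k : ℕ} (hk : 1 ≤ k) :
    (6 * k + 1).Prime ↔
      ∀ i j : ℕ, 1 ≤ i → 1 ≤ j → k ≠ 6 * i * j + i + j ∧ k ≠ 6 * i * j - i - j := by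
  rw [← not_iff_not, not_prime_iff_of_not_two_dvd_of_not_three_dvd (by omega) (by omega)
    (by omega)]
  push Not
  -- the two shapes of the wrong residue mod 6 drop out
  refine exists_congr fun i => exists_congr fun j => ?_
  omega

theorem prime_six_mul_sub_one_iff {k : ℕ} (hk : 1 ≤ k) :
    (6 * k - 1).Prime ↔
      ∀ i j : ℕ, 1 ≤ i → 1 ≤ j → k ≠ 6 * i * j - i + j ∧ k ≠ 6 * i * j + i - j := by
  rw [← not_iff_not, not_prime_iff_of_not_two_dvd_of_not_three_dvd (by omega) (by omega)
    (by omega)]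
  push Not
  refine exists_congr fun i => exists_congr fun j => ?_
  omega

theorem Prime.eq_two_or_eq_three_or_exists_six_mul_sub_one_or_add_one {p : ℕ} (hp : p.Prime) :
    p = 2 ∨ p = 3 ∨ ∃ k, 1 ≤ k ∧ (p = 6 * k - 1 ∨ p = 6 * k + 1) := by
  by_contra! h
  have h2 : ¬ 2 ∣ p := fun hd => h.1 ((prime_dvd_prime_iff_eq prime_two hp).1 hd).symm
  have h3 : ¬ 3 ∣ p := fun hd => h.2.1 ((prime_dvd_prime_iff_eq prime_three hp).1 hd).symm
  obtain ⟨k, hk, hpk⟩ := exists_eq_six_mul_add_one_or_sub_one hp.two_le h2 h3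
  exact hpk.elim (h.2.2 k hk).2 (h.2.2 k hk).1

end Nat

theorem stmt_11 :
    {p : ℕ | Nat.Prime p} =
      {2} ∪ {3} ∪
      {n : ℕ | ∃ k : ℕ, 1 ≤ k ∧ n = 6 * k - 1 ∧
        ∀ i j : ℕ, 1 ≤ i → 1 ≤ j →
          k ≠ 6 * i * j - i + j ∧ k ≠ 6 * i * j + i - j} ∪
      {n : ℕ | ∃ k : ℕ, 1 ≤ k ∧ n = 6 * k + 1 ∧
        ∀ i j : ℕ, 1 ≤ i → 1 ≤ j →
          k ≠ 6 * i * j + i + j ∧ k ≠ 6 * i * j - i - j} := by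
  ext p
  simp only [Set.mem_ofPred_eq, Set.mem_union, Set.mem_singleton_iff]
  constructor
  · intro hp
    rcases hp.eq_two_or_eq_three_or_exists_six_mul_sub_one_or_add_one with
      rfl | rfl | ⟨k, hk, rfl | rfl⟩
    · exact .inl <| .inl <| .inl rfl
    · exact .inl <| .inl <| .inr rfl
    · exact .inl <| .inr ⟨k, hk, rfl, (Nat.prime_six_mul_sub_one_iff hk).1 hp⟩
    · exact .inr ⟨k, hk, rfl, (Nat.prime_six_mul_add_one_iff hk).1 hp⟩
  · rintro (((rfl | rfl) | ⟨k, hk, rfl, h⟩) | ⟨k, hk, rfl, h⟩)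
    · exact Nat.prime_two
    · exact Nat.prime_three
    · exact (Nat.prime_six_mul_sub_one_iff hk).2 h
    · exact (Nat.prime_six_mul_add_one_iff hk).2 h
end
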